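/- arXiv:1408.5532 — 2 statements merged into one kernel-verified Lean document; each statement's English description precedes it below -/
import Mathlib

section
/- Suppose the steplength and regularization sequences satisfy: (a) 0 < γ_{f,k} ≤ ε_k/(L_{F,x} + ε_k)² for all k; (b) γ_{f,k} ε_k < 1 for all k and Σ_k γ_{f,k} ε_k = ∞; (c) |ε_{k−1} − ε_k|/(γ_{f,k} ε_k²) → 0; and (d) q_g^k/ε_k → 0 and q_g^{k−1}/(γ_{f,k} ε_k²) → 0, where q_g ∈ (0,1) is the geometric contraction rate of the learning iterates. Then the iterates x_k of the regularized projection scheme and the Tikhonov solutions x_k^t of VI(X, F(·,θ_k) + ε_k I) satisfy ‖x_k − x_k^t‖ → 0 as k → ∞. -/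
set_option maxHeartbeats 1000000





open Filter Topology RealInnerProductSpace

section helpers
variable {E : Type*} [NormedAddCommGroup E] [InnerProductSpace ℝ E]

lemma my_proj_vi {X : Set E} (hcv : Convex ℝ X) {P : E → E}
    (hP : ∀ y, P y ∈ X ∧ ∀ z ∈ X, ‖y - P y‖ ≤ ‖y - z‖) (u : E) :
    ∀ w ∈ X, ⟪u - P u, w - P u⟫ ≤ 0 := by
  have hne : Nonempty X := ⟨⟨P u, (hP u).1⟩⟩
  have h1 : ‖u - P u‖ = ⨅ w : X, ‖u - w‖ := by
    refine le_antisymm (le_ciInf fun z => (hP u).2 z z.2) ?_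
    have hb : BddBelow (Set.range fun w : X => ‖u - (w : E)‖) := by
      refine ⟨0, ?_⟩
      rintro _ ⟨z, rfl⟩
      exact norm_nonneg _
    exact ciInf_le hb (⟨P u, (hP u).1⟩ : X)
  exact (norm_eq_iInf_iff_real_inner_le_zero hcv (hP u).1).1 h1

lemma my_proj_dist {X : Set E} {p q u v : E} (hp : p ∈ X) (hq : q ∈ X)
    (hu : ∀ w ∈ X, ⟪u - p, w - p⟫ ≤ 0) (hv : ∀ w ∈ X, ⟪v - q, w - q⟫ ≤ 0) :
    ‖p - q‖ ≤ ‖u - v‖ := by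
  have h1 := hu q hq
  have h2 := hv p hp
  have e : ⟪u - v, p - q⟫ = ⟪u - p, p - q⟫ - ⟪v - q, p - q⟫ + ‖p - q‖ ^ 2 := by
    rw [show u - v = (u - p) - (v - q) + (p - q) by abel]
    rw [inner_add_left, inner_sub_left, real_inner_self_eq_norm_sq]
  have e2 : ⟪u - p, p - q⟫ = -⟪u - p, q - p⟫ := by
    rw [show p - q = -(q - p) by abel, inner_neg_right]
  have key : ‖p - q‖ ^ 2 ≤ ⟪u - v, p - q⟫ := by rw [e, e2]; linarith
  have hcs : ⟪u - v, p - q⟫ ≤ ‖u - v‖ * ‖p - q‖ := real_inner_le_norm _ _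
  rcases (norm_nonneg (p - q)).lt_or_eq with hpos | h0
  · nlinarith
  · rw [← h0]; exact norm_nonneg _

lemma my_seq_conv (a t s : ℕ → ℝ) (ha0 : ∀ k, 0 ≤ a k) (ht0 : ∀ k, 0 < t k)
    (ht1 : ∀ k, t k ≤ 1)
    (hrec : ∀ k, a (k + 1) ≤ (1 - t k) * a k + s k)
    (hsum : Tendsto (fun K => ∑ k ∈ Finset.range K, t k) atTop atTop)
    (hratio : Tendsto (fun k => s k / t (k + 1)) atTop (𝓝 0)) :
    Tendsto a atTop (𝓝 0) := by
  rw [Metric.tendsto_atTop]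
  intro ε hε
  obtain ⟨K, hK⟩ := Metric.tendsto_atTop.mp hratio (ε / 4) (by positivity)
  have hs' : ∀ k, K ≤ k → s k ≤ ε / 4 * t (k + 1) := by
    intro k hk
    have h := hK k hk
    rw [Real.dist_eq, sub_zero] at h
    have h' : s k / t (k + 1) < ε / 4 := (le_abs_self _).trans_lt h
    rw [div_lt_iff₀ (ht0 (k + 1))] at h'
    linarith
  set Q : ℕ → ℝ := fun k => ∏ i ∈ Finset.Ico K k, (1 - t i) with hQdef
  have hQnn : ∀ k, 0 ≤ Q k := fun k =>
    Finset.prod_nonneg fun i _ => by linarith [ht1 i]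
  have inv : ∀ k, K ≤ k → a k ≤ Q k * a K + ε / 4 * (1 + t k - Q k) := by
    intro k hk
    induction k, hk using Nat.le_induction with
    | base =>
      have : Q K = 1 := by simp [hQdef]
      rw [this]
      have := ht0 K
      nlinarith
    | succ k hk ih =>
      have hQs : Q (k + 1) = Q k * (1 - t k) := Finset.prod_Ico_succ_top hk _
      have h1 := hrec k
      have h2 := hs' k hk
      have h4 : (1 - t k) * a k ≤ (1 - t k) * (Q k * a K + ε / 4 * (1 + t k - Q k)) :=
        mul_le_mul_of_nonneg_left ih (by linarith [ht1 k])
      rw [hQs]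
      nlinarith [mul_nonneg hε.le (sq_nonneg (t k))]
  have hQ0 : Tendsto Q atTop (𝓝 0) := by
    have hub : ∀ k, Q k ≤ Real.exp (-∑ i ∈ Finset.Ico K k, t i) := by
      intro k
      calc Q k ≤ ∏ i ∈ Finset.Ico K k, Real.exp (-t i) :=
            Finset.prod_le_prod (fun i _ => by linarith [ht1 i])
              (fun i _ => by linarith [Real.add_one_le_exp (-t i)])
        _ = Real.exp (∑ i ∈ Finset.Ico K k, -t i) := (Real.exp_sum _ _).symm
        _ = _ := by rw [Finset.sum_neg_distrib]
    have hexp : Tendsto (fun k => Real.exp (-∑ i ∈ Finset.Ico K k, t i)) atTop (𝓝 0) := by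
      apply Real.tendsto_exp_atBot.comp
      apply tendsto_neg_atTop_atBot.comp
      have heq : ∀ᶠ k in atTop, (∑ i ∈ Finset.range k, t i) - ∑ i ∈ Finset.range K, t i
          = ∑ i ∈ Finset.Ico K k, t i := by
        filter_upwards [eventually_ge_atTop K] with k hk
        rw [Finset.sum_Ico_eq_sub _ hk]
      exact Tendsto.congr' heq (tendsto_atTop_add_const_right _ _ hsum)
    exact squeeze_zero hQnn hub hexp
  have hQa : Tendsto (fun k => Q k * a K) atTop (𝓝 0) := by
    simpa using hQ0.mul_const (a K)
  obtain ⟨K', hK'⟩ := Metric.tendsto_atTop.mp hQa (ε / 4) (by positivity)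
  refine ⟨max K K', fun k hk => ?_⟩
  have hk1 : K ≤ k := le_trans (le_max_left _ _) hk
  have hk2 : K' ≤ k := le_trans (le_max_right _ _) hk
  have h5 := inv k hk1
  have h6 := hK' k hk2
  rw [Real.dist_eq, sub_zero] at h6
  have h7 : Q k * a K < ε / 4 := (le_abs_self _).trans_lt h6
  rw [Real.dist_eq, sub_zero, abs_of_nonneg (ha0 k)]
  nlinarith [ht1 k, hQnn k]

end helpers

/-- Under the steplength/regularization conditions (a)–(d), the iterates of the
regularized projection scheme track the Tikhonov trajectory: `‖x_k − x_k^t‖ → 0`. -/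
theorem stmt_17
    {n m : ℕ}
    (X : Set (EuclideanSpace ℝ (Fin n))) (Θ : Set (EuclideanSpace ℝ (Fin m)))
    (hXne : X.Nonempty) (hXcl : IsClosed X) (hXcv : Convex ℝ X) (hXcp : IsCompact X)
    (hΘne : Θ.Nonempty) (hΘcl : IsClosed Θ) (hΘcv : Convex ℝ Θ)
    (M : ℝ) (hMX : ∀ y ∈ X, ‖y‖ ≤ M)
    (F : EuclideanSpace ℝ (Fin n) → EuclideanSpace ℝ (Fin m) → EuclideanSpace ℝ (Fin n))
    (g : EuclideanSpace ℝ (Fin m) → ℝ)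
    (gradg : EuclideanSpace ℝ (Fin m) → EuclideanSpace ℝ (Fin m))
    -- g is continuously differentiable and strongly convex with minimizer θ*
    (hgdiff : ∀ ϑ, HasGradientAt g (gradg ϑ) ϑ)
    (hggradcont : Continuous gradg)
    (ηg Gg : ℝ) (hηg : 0 < ηg) (hGg : 0 < Gg)
    (hstrg : StrongConvexOn Θ ηg g)
    (hLipg : ∀ θ1 θ2, ‖gradg θ1 - gradg θ2‖ ≤ Gg * ‖θ1 - θ2‖)
    (θs : EuclideanSpace ℝ (Fin m)) (hθsΘ : θs ∈ Θ) (hθsmin : ∀ ϑ ∈ Θ, g θs ≤ g ϑ)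
    -- monotonicity (for each θ ∈ Θ) and Lipschitz continuity of F
    (hmono : ∀ θ' ∈ Θ, ∀ x1 ∈ X, ∀ x2 ∈ X, 0 ≤ ⟪F x1 θ' - F x2 θ', x1 - x2⟫)
    (LFx LFθ : ℝ)
    (hLipFx : ∀ θ' ∈ Θ, ∀ x1 ∈ X, ∀ x2 ∈ X, ‖F x1 θ' - F x2 θ'‖ ≤ LFx * ‖x1 - x2‖)
    (hLipFθ : ∀ y ∈ X, ∀ θ1 ∈ Θ, ∀ θ2 ∈ Θ, ‖F y θ1 - F y θ2‖ ≤ LFθ * ‖θ1 - θ2‖)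
    -- Euclidean projections onto X and Θ
    (PX : EuclideanSpace ℝ (Fin n) → EuclideanSpace ℝ (Fin n))
    (PΘ : EuclideanSpace ℝ (Fin m) → EuclideanSpace ℝ (Fin m))
    (hPX : ∀ y, PX y ∈ X ∧ ∀ z ∈ X, ‖y - PX y‖ ≤ ‖y - z‖)
    (hPΘ : ∀ y, PΘ y ∈ Θ ∧ ∀ z ∈ Θ, ‖y - PΘ y‖ ≤ ‖y - z‖)
    -- the learning iterates with their geometric rate
    (γg : ℝ) (hγg0 : 0 < γg) (hγg2 : γg < 2 / Gg)
    (θ : ℕ → EuclideanSpace ℝ (Fin m)) (hθ0 : θ 0 ∈ Θ)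
    (hθit : ∀ k, θ (k + 1) = PΘ (θ k - γg • gradg (θ k)))
    (qg : ℝ) (hqg0 : 0 < qg) (hqg1 : qg < 1)
    (hθrate : ∀ k, ‖θ k - θs‖ ≤ qg ^ k * ‖θ 0 - θs‖)
    -- steplengths and regularization parameters satisfying (a)–(d)
    (γf ε : ℕ → ℝ) (hε : ∀ k, 0 < ε k)
    (ha : ∀ k, 0 < γf k ∧ γf k ≤ ε k / (LFx + ε k) ^ 2)
    (hb1 : ∀ k, γf k * ε k < 1)
    (hb2 : Tendsto (fun K => ∑ k ∈ Finset.range K, γf k * ε k) atTop atTop)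
    (hc : Tendsto (fun k => |ε k - ε (k + 1)| / (γf (k + 1) * (ε (k + 1)) ^ 2))
      atTop (𝓝 0))
    (hd1 : Tendsto (fun k => qg ^ k / ε k) atTop (𝓝 0))
    (hd2 : Tendsto (fun k => qg ^ k / (γf (k + 1) * (ε (k + 1)) ^ 2)) atTop (𝓝 0))
    -- the regularized projection scheme
    (x : ℕ → EuclideanSpace ℝ (Fin n)) (hx0 : x 0 ∈ X)
    (hxit : ∀ k, x (k + 1) = PX (x k - γf k • (F (x k) (θ k) + ε k • x k)))
    -- the Tikhonov trajectory
    (xt : ℕ → EuclideanSpace ℝ (Fin n))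
    (hxt : ∀ k, xt k ∈ X ∧ ∀ y ∈ X, 0 ≤ ⟪F (xt k) (θ k) + ε k • xt k, y - xt k⟫) :
    Tendsto (fun k => ‖x k - xt k‖) atTop (𝓝 0) := by
  -- basic memberships and constants
  have hθΘ : ∀ k, θ k ∈ Θ := by
    intro k
    induction k with
    | zero => exact hθ0
    | succ k ih => rw [hθit k]; exact (hPΘ _).1
  have hxX : ∀ k, x k ∈ X := by
    intro k
    induction k with
    | zero => exact hx0
    | succ k ih => rw [hxit k]; exact (hPX _).1
  obtain ⟨x0', hx0'⟩ := hXne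
  have hM0 : 0 ≤ M := (norm_nonneg x0').trans (hMX _ hx0')
  set C : ℝ := ‖θ 0 - θs‖ with hCdef
  have hC0 : 0 ≤ C := norm_nonneg _
  set t : ℕ → ℝ := fun k => γf k * ε k / 2 with htdef
  set s : ℕ → ℝ := fun k => ‖xt (k + 1) - xt k‖ with hsdef
  have ht0 : ∀ k, 0 < t k := fun k => by
    have := (ha k).1; have := hε k; positivity
  have ht1 : ∀ k, t k ≤ 1 := fun k => by
    have := hb1 k; simp only [htdef]; linarith
  -- the core recursion
  have hrec : ∀ k, ‖x (k + 1) - xt (k + 1)‖ ≤ (1 - t k) * ‖x k - xt k‖ + s k := by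
    intro k
    set u := x k - γf k • (F (x k) (θ k) + ε k • x k) with hudef
    set v := xt k - γf k • (F (xt k) (θ k) + ε k • xt k) with hvdef
    have hviu : ∀ w ∈ X, ⟪u - PX u, w - PX u⟫ ≤ 0 := my_proj_vi hXcv hPX u
    have hviv : ∀ w ∈ X, ⟪v - xt k, w - xt k⟫ ≤ 0 := by
      intro w hw
      have hve : v - xt k = -(γf k • (F (xt k) (θ k) + ε k • xt k)) := by
        rw [hvdef]; abel
      rw [hve, inner_neg_left, real_inner_smul_left]
      have h := (hxt k).2 w hw
      have hγ := (ha k).1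
      have : 0 ≤ γf k * ⟪F (xt k) (θ k) + ε k • xt k, w - xt k⟫ :=
        mul_nonneg hγ.le h
      linarith
    have step1 : ‖x (k + 1) - xt k‖ ≤ ‖u - v‖ := by
      rw [hxit k]
      exact my_proj_dist (hPX u).1 (hxt k).1 hviu hviv
    -- contraction bound on ‖u - v‖
    set d := x k - xt k with hddef
    set G := F (x k) (θ k) - F (xt k) (θ k) with hGdef
    have huv : u - v = d - γf k • (G + ε k • d) := by
      rw [hudef, hvdef, hddef, hGdef]
      module
    have hG : ‖G‖ ≤ LFx * ‖d‖ := hLipFx (θ k) (hθΘ k) (x k) (hxX k) (xt k) (hxt k).1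
    have hmonoG : 0 ≤ ⟪G, d⟫ := hmono (θ k) (hθΘ k) (x k) (hxX k) (xt k) (hxt k).1
    have hγpos := (ha k).1
    have hεpos := hε k
    have hsq : ‖u - v‖ ^ 2
        = ‖d‖ ^ 2 - 2 * (γf k * ⟪d, G + ε k • d⟫) + γf k ^ 2 * ‖G + ε k • d‖ ^ 2 := by
      rw [huv, norm_sub_sq_real, real_inner_smul_right, norm_smul, Real.norm_eq_abs,
        mul_pow, sq_abs]
    have hinner : ε k * ‖d‖ ^ 2 ≤ ⟪d, G + ε k • d⟫ := by
      rw [inner_add_right, real_inner_smul_right, real_inner_self_eq_norm_sq]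
      have : ⟪d, G⟫ = ⟪G, d⟫ := real_inner_comm _ _
      linarith
    have hnormw : ‖G + ε k • d‖ ≤ (LFx + ε k) * ‖d‖ := by
      calc ‖G + ε k • d‖ ≤ ‖G‖ + ‖ε k • d‖ := norm_add_le _ _
        _ = ‖G‖ + ε k * ‖d‖ := by rw [norm_smul, Real.norm_eq_abs, abs_of_pos hεpos]
        _ ≤ (LFx + ε k) * ‖d‖ := by linarith
    have hnormw2 : ‖G + ε k • d‖ ^ 2 ≤ ((LFx + ε k) * ‖d‖) ^ 2 :=
      pow_le_pow_left₀ (norm_nonneg _) hnormw 2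
    have hγ2 : γf k ^ 2 * (LFx + ε k) ^ 2 ≤ γf k * ε k := by
      have h2 := (ha k).2
      have hpos : 0 < (LFx + ε k) ^ 2 := by
        rcases (sq_nonneg (LFx + ε k)).lt_or_eq with h | h
        · exact h
        · exfalso; rw [← h, div_zero] at h2; linarith
      have h3 : γf k * (LFx + ε k) ^ 2 ≤ ε k := (le_div_iff₀ hpos).mp h2
      nlinarith
    have hsqle : ‖u - v‖ ^ 2 ≤ ((1 - t k) * ‖d‖) ^ 2 := by
      have h1 : γf k ^ 2 * ‖G + ε k • d‖ ^ 2 ≤ (γf k * ε k) * ‖d‖ ^ 2 := by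
        calc γf k ^ 2 * ‖G + ε k • d‖ ^ 2 ≤ γf k ^ 2 * ((LFx + ε k) * ‖d‖) ^ 2 :=
              mul_le_mul_of_nonneg_left hnormw2 (sq_nonneg _)
          _ = (γf k ^ 2 * (LFx + ε k) ^ 2) * ‖d‖ ^ 2 := by ring
          _ ≤ (γf k * ε k) * ‖d‖ ^ 2 := mul_le_mul_of_nonneg_right hγ2 (sq_nonneg _)
      have h2 : 2 * (γf k * (ε k * ‖d‖ ^ 2)) ≤ 2 * (γf k * ⟪d, G + ε k • d⟫) := by
        have := mul_le_mul_of_nonneg_left hinner hγpos.le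
        linarith
      have hb := hb1 k
      simp only [htdef]
      nlinarith [sq_nonneg (‖d‖), sq_nonneg (γf k * ε k * ‖d‖)]
    have step2 : ‖u - v‖ ≤ (1 - t k) * ‖d‖ := by
      have h1t : 0 ≤ 1 - t k := by have := ht1 k; linarith
      calc ‖u - v‖ = Real.sqrt (‖u - v‖ ^ 2) := (Real.sqrt_sq (norm_nonneg _)).symm
        _ ≤ Real.sqrt (((1 - t k) * ‖d‖) ^ 2) := Real.sqrt_le_sqrt hsqle
        _ = (1 - t k) * ‖d‖ := Real.sqrt_sq (mul_nonneg h1t (norm_nonneg _))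
    calc ‖x (k + 1) - xt (k + 1)‖
        ≤ ‖x (k + 1) - xt k‖ + ‖xt k - xt (k + 1)‖ := by
          have := dist_triangle (x (k + 1)) (xt k) (xt (k + 1))
          simpa [dist_eq_norm] using this
      _ ≤ (1 - t k) * ‖d‖ + ‖xt k - xt (k + 1)‖ := by
          have := step1.trans step2; linarith
      _ = (1 - t k) * ‖x k - xt k‖ + s k := by
          rw [hsdef, hddef, norm_sub_rev (xt k)]
  -- bound on the Tikhonov trajectory steps
  have hθdiff : ∀ k, ‖θ k - θ (k + 1)‖ ≤ 2 * C * qg ^ k := by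
    intro k
    have h1 := hθrate k
    have h2 := hθrate (k + 1)
    have h3 : ‖θ k - θ (k + 1)‖ ≤ ‖θ k - θs‖ + ‖θ (k + 1) - θs‖ := by
      have := dist_triangle (θ k) θs (θ (k + 1))
      simpa [dist_eq_norm, norm_sub_rev (θ (k + 1)) θs] using this
    have h4 : qg ^ (k + 1) ≤ qg ^ k := by
      have := pow_nonneg hqg0.le k
      calc qg ^ (k + 1) = qg ^ k * qg := by ring
        _ ≤ qg ^ k * 1 := by nlinarith
        _ = qg ^ k := mul_one _
    have h5 : qg ^ (k + 1) * C ≤ qg ^ k * C := mul_le_mul_of_nonneg_right h4 hC0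
    linarith
  have hsbound : ∀ k, s k ≤ (|LFθ| * (2 * C * qg ^ k) + |ε k - ε (k + 1)| * M) / ε (k + 1) := by
    intro k
    set p := xt k with hpdef
    set r := xt (k + 1) with hrdef
    set d' := r - p with hd'def
    have hpX : p ∈ X := (hxt k).1
    have hrX : r ∈ X := (hxt (k + 1)).1
    have hnum : 0 ≤ |LFθ| * (2 * C * qg ^ k) + |ε k - ε (k + 1)| * M := by
      have h1 : (0:ℝ) ≤ |LFθ| * (2 * C * qg ^ k) := by positivity
      have h2 : (0:ℝ) ≤ |ε k - ε (k + 1)| * M := mul_nonneg (abs_nonneg _) hM0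
      linarith
    rcases (norm_nonneg d').lt_or_eq with hdpos | hd0
    swap
    · have hs0 : s k = ‖d'‖ := by rw [hsdef, hd'def]
      rw [hs0, ← hd0]
      exact div_nonneg hnum (hε (k + 1)).le
    -- main estimate
    have h1 : 0 ≤ ⟪F p (θ k), d'⟫ + ε k * ⟪p, d'⟫ := by
      have := (hxt k).2 r hrX
      rwa [inner_add_left, real_inner_smul_left] at this
    have h2 : 0 ≤ -⟪F r (θ (k + 1)), d'⟫ - ε (k + 1) * ⟪r, d'⟫ := by
      have h := (hxt (k + 1)).2 p hpX
      rw [show p - r = -d' by rw [hd'def]; abel, inner_add_left, real_inner_smul_left,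
        inner_neg_right, inner_neg_right] at h
      linarith
    have hm : ⟪F p (θ k), d'⟫ ≤ ⟪F r (θ k), d'⟫ := by
      have h := hmono (θ k) (hθΘ k) p hpX r hrX
      have e : ⟪F p (θ k) - F r (θ k), p - r⟫
          = ⟪F p (θ k), p - r⟫ - ⟪F r (θ k), p - r⟫ := inner_sub_left _ _ _
      have epr : p - r = -d' := by rw [hd'def]; abel
      have e2 : ⟪F p (θ k), p - r⟫ = -⟪F p (θ k), d'⟫ := by rw [epr, inner_neg_right]
      have e3 : ⟪F r (θ k), p - r⟫ = -⟪F r (θ k), d'⟫ := by rw [epr, inner_neg_right]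
      rw [e, e2, e3] at h
      linarith
    have hLipinner : ⟪F r (θ k), d'⟫ - ⟪F r (θ (k + 1)), d'⟫
        ≤ |LFθ| * (2 * C * qg ^ k) * ‖d'‖ := by
      have e : ⟪F r (θ k), d'⟫ - ⟪F r (θ (k + 1)), d'⟫
          = ⟪F r (θ k) - F r (θ (k + 1)), d'⟫ := by rw [inner_sub_left]
      rw [e]
      calc ⟪F r (θ k) - F r (θ (k + 1)), d'⟫ ≤ ‖F r (θ k) - F r (θ (k + 1))‖ * ‖d'‖ :=
            real_inner_le_norm _ _
        _ ≤ (LFθ * ‖θ k - θ (k + 1)‖) * ‖d'‖ :=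
            mul_le_mul_of_nonneg_right
              (hLipFθ r hrX (θ k) (hθΘ k) (θ (k + 1)) (hθΘ (k + 1))) (norm_nonneg _)
        _ ≤ (|LFθ| * (2 * C * qg ^ k)) * ‖d'‖ := by
            have h1 : LFθ * ‖θ k - θ (k + 1)‖ ≤ |LFθ| * ‖θ k - θ (k + 1)‖ :=
              mul_le_mul_of_nonneg_right (le_abs_self _) (norm_nonneg _)
            have h2 : |LFθ| * ‖θ k - θ (k + 1)‖ ≤ |LFθ| * (2 * C * qg ^ k) :=
              mul_le_mul_of_nonneg_left (hθdiff k) (abs_nonneg _)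
            exact mul_le_mul_of_nonneg_right (h1.trans h2) (norm_nonneg _)
    have hpd : (ε k - ε (k + 1)) * ⟪p, d'⟫ ≤ |ε k - ε (k + 1)| * (M * ‖d'‖) := by
      calc (ε k - ε (k + 1)) * ⟪p, d'⟫ ≤ |(ε k - ε (k + 1)) * ⟪p, d'⟫| := le_abs_self _
        _ = |ε k - ε (k + 1)| * |⟪p, d'⟫| := abs_mul _ _
        _ ≤ |ε k - ε (k + 1)| * (‖p‖ * ‖d'‖) :=
            mul_le_mul_of_nonneg_left (abs_real_inner_le_norm _ _) (abs_nonneg _)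
        _ ≤ |ε k - ε (k + 1)| * (M * ‖d'‖) := by
            have : ‖p‖ * ‖d'‖ ≤ M * ‖d'‖ :=
              mul_le_mul_of_nonneg_right (hMX p hpX) (norm_nonneg _)
            exact mul_le_mul_of_nonneg_left this (abs_nonneg _)
    have hself : ⟪p, d'⟫ - ⟪r, d'⟫ = -‖d'‖ ^ 2 := by
      rw [← inner_sub_left, show p - r = -d' by rw [hd'def]; abel, inner_neg_left,
        real_inner_self_eq_norm_sq]
    have e4 : ε k * ⟪p, d'⟫ - ε (k + 1) * ⟪r, d'⟫
        = (ε k - ε (k + 1)) * ⟪p, d'⟫ - ε (k + 1) * ‖d'‖ ^ 2 := by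
      have : ε k * ⟪p, d'⟫ - ε (k + 1) * ⟪r, d'⟫
          = (ε k - ε (k + 1)) * ⟪p, d'⟫ + ε (k + 1) * (⟪p, d'⟫ - ⟪r, d'⟫) := by ring
      rw [this, hself]; ring
    have key : ε (k + 1) * ‖d'‖ ^ 2
        ≤ (|LFθ| * (2 * C * qg ^ k) + |ε k - ε (k + 1)| * M) * ‖d'‖ := by
      nlinarith [h1, h2, hm, hLipinner, hpd, e4]
    have hsk : s k = ‖d'‖ := by rw [hsdef, hd'def]
    rw [hsk, le_div_iff₀ (hε (k + 1))]
    nlinarith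
  -- ratio tendsto zero
  have hratio : Tendsto (fun k => s k / t (k + 1)) atTop (𝓝 0) := by
    have hB : Tendsto (fun k => 4 * |LFθ| * C * (qg ^ k / (γf (k + 1) * ε (k + 1) ^ 2))
        + 2 * M * (|ε k - ε (k + 1)| / (γf (k + 1) * ε (k + 1) ^ 2))) atTop (𝓝 0) := by
      have := (hd2.const_mul (4 * |LFθ| * C)).add (hc.const_mul (2 * M))
      simpa using this
    refine squeeze_zero (fun k => div_nonneg (norm_nonneg _) (ht0 (k + 1)).le) ?_ hB
    intro k
    have htpos := ht0 (k + 1)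
    have hskb := hsbound k
    have hdivle : s k / t (k + 1)
        ≤ ((|LFθ| * (2 * C * qg ^ k) + |ε k - ε (k + 1)| * M) / ε (k + 1)) / t (k + 1) :=
      div_le_div_of_nonneg_right hskb htpos.le
    refine hdivle.trans (le_of_eq ?_)
    have hγ1 := (ha (k + 1)).1.ne'
    have hε1 := (hε (k + 1)).ne'
    simp only [htdef]
    field_simp
    ring
  -- conclusion
  exact my_seq_conv (fun k => ‖x k - xt k‖) t s (fun k => norm_nonneg _) ht0 ht1 hrec
    (by
      have : (fun K => ∑ k ∈ Finset.range K, t k)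
          = fun K => (∑ k ∈ Finset.range K, γf k * ε k) / 2 := by
        funext K
        rw [Finset.sum_div]
      rw [this]
      exact hb2.atTop_div_const two_pos)
    hratio
end

section
/- Let L_{F,x} > 0 and q_g ∈ (0,1), and for 0 < β < α < 1 with α + β < 1 define γ_{f,k} = 1/((L_{F,x}+1)² (k+1)^α) and ε_k = 1/(k+1)^β. Then these sequences satisfy: (a) 0 < γ_{f,k} ≤ ε_k/(L_{F,x} + ε_k)² ≤ ε₀/L_{F,x}² for all k; (b) γ_{f,k} ε_k < 1 for all k and Σ_{k=1}^∞ γ_{f,k} ε_k = ∞; (c) |ε_{k−1} − ε_k|/(γ_{f,k} ε_k²) → 0 as k → ∞; and (d) q_g^k/ε_k → 0 and q_g^{k−1}/(γ_{f,k} ε_k²) → 0 as k → ∞. -/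
open Filter Topology

/-- Feasibility of the steplength/regularization choice
`γ_{f,k} = 1/((L_{F,x}+1)²(k+1)^α)` and `ε_k = (k+1)^{−β}` with `0 < β < α < 1` and
`α + β < 1`: conditions (a)–(d) of the regularized scheme hold. -/
theorem stmt_19
    (LFx qg α β : ℝ) (hLFx : 0 < LFx) (hqg0 : 0 < qg) (hqg1 : qg < 1)
    (hβ : 0 < β) (hβα : β < α) (hα : α < 1) (hαβ : α + β < 1)
    (γf ε : ℕ → ℝ)
    (hγf : ∀ k : ℕ, γf k = 1 / ((LFx + 1) ^ 2 * ((k : ℝ) + 1) ^ α))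
    (hε : ∀ k : ℕ, ε k = ((k : ℝ) + 1) ^ (-β)) :
    (∀ k : ℕ, 0 < γf k ∧ γf k ≤ ε k / (LFx + ε k) ^ 2 ∧
        ε k / (LFx + ε k) ^ 2 ≤ ε 0 / LFx ^ 2) ∧
      ((∀ k : ℕ, γf k * ε k < 1) ∧
        Tendsto (fun K => ∑ k ∈ Finset.range K, γf k * ε k) atTop atTop) ∧
      Tendsto (fun k => |ε k - ε (k + 1)| / (γf (k + 1) * (ε (k + 1)) ^ 2))
        atTop (𝓝 0) ∧
      (Tendsto (fun k => qg ^ k / ε k) atTop (𝓝 0) ∧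
        Tendsto (fun k => qg ^ k / (γf (k + 1) * (ε (k + 1)) ^ 2)) atTop (𝓝 0)) := by
  have hk1 : ∀ k : ℕ, (1:ℝ) ≤ (k:ℝ) + 1 := fun k => by
    have := Nat.cast_nonneg (α := ℝ) k; linarith
  have hkpos : ∀ k : ℕ, (0:ℝ) < (k:ℝ) + 1 := fun k => by positivity
  have hεpos : ∀ k : ℕ, 0 < ε k := fun k => by
    rw [hε]; exact Real.rpow_pos_of_pos (hkpos k) _
  have hε1 : ∀ k : ℕ, ε k ≤ 1 := fun k => by
    rw [hε]; exact Real.rpow_le_one_of_one_le_of_nonpos (hk1 k) (by linarith)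
  have hγpos : ∀ k : ℕ, 0 < γf k := fun k => by
    rw [hγf]
    have := Real.rpow_pos_of_pos (hkpos k) α
    positivity
  have hε0 : ε 0 = 1 := by
    rw [hε]; norm_num
  have hL1 : (1:ℝ) < (LFx + 1) ^ 2 := by nlinarith
  have hmain : ∀ (s : ℝ) (c : ℕ),
      Tendsto (fun k : ℕ => ((k:ℝ)+(c:ℝ))^s * qg^k) atTop (𝓝 0) := by
    intro s c
    have hb : 0 < -Real.log qg := by
      have := Real.log_neg hqg0 hqg1; linarith
    have h1 := tendsto_rpow_mul_exp_neg_mul_atTop_nhds_zero s _ hb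
    have h2 : Tendsto (fun k : ℕ => ((k:ℝ)+(c:ℝ))) atTop atTop :=
      tendsto_atTop_add_const_right _ _ tendsto_natCast_atTop_atTop
    have h3 := h1.comp h2
    have h4 : ∀ k : ℕ, (((k:ℝ)+(c:ℝ))^s * Real.exp (-(-Real.log qg) * ((k:ℝ)+(c:ℝ))))
        = qg^c * (((k:ℝ)+(c:ℝ))^s * qg^k) := by
      intro k
      have hh : -(-Real.log qg) * ((k:ℝ)+(c:ℝ)) = ((k+c : ℕ):ℝ) * Real.log qg := by
        push_cast; ring
      rw [hh, Real.exp_nat_mul, Real.exp_log hqg0, pow_add]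
      ring
    have h5 : Tendsto (fun k : ℕ => qg^c * (((k:ℝ)+(c:ℝ))^s * qg^k)) atTop (𝓝 0) :=
      h3.congr h4
    have h6 := h5.const_mul ((qg:ℝ)^c)⁻¹
    rw [mul_zero] at h6
    refine h6.congr fun k => ?_
    rw [← mul_assoc, inv_mul_cancel₀ (by positivity), one_mul]
  have hLne : (LFx + 1) ≠ 0 := by positivity
  -- denominator formula, used in parts (c) and (d)
  have hden : ∀ k : ℕ, γf (k+1) * ε (k+1) ^ 2
      = ((k:ℝ)+2) ^ (-(α+2*β)) / (LFx+1)^2 := by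
    intro k
    have hb : (0:ℝ) < (k:ℝ)+2 := by positivity
    have hcast : ((k+1:ℕ):ℝ) + 1 = (k:ℝ)+2 := by push_cast; ring
    have h1 : ε (k+1) ^ 2 = ((k:ℝ)+2) ^ (-(2*β)) := by
      rw [hε, hcast, pow_two, ← Real.rpow_add hb, show -β + -β = -(2*β) by ring]
    have hαne : ((k:ℝ)+2) ^ α ≠ 0 := (Real.rpow_pos_of_pos hb α).ne'
    rw [hγf, hcast, h1, show -(α+2*β) = -α + -(2*β) by ring, Real.rpow_add hb,
      Real.rpow_neg hb.le α]
    field_simp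
  refine ⟨?_, ⟨?_, ?_⟩, ?_, ?_, ?_⟩
  · -- (a)
    intro k
    refine ⟨hγpos k, ?_, ?_⟩
    · have hnum : ((k:ℝ)+1) ^ (-α) ≤ ε k := by
        rw [hε]; exact Real.rpow_le_rpow_of_exponent_le (hk1 k) (by linarith)
      have hdd : (LFx + ε k) ^ 2 ≤ (LFx + 1) ^ 2 := by
        have := hε1 k; nlinarith [hεpos k]
      have heq : γf k = ((k:ℝ)+1) ^ (-α) / (LFx+1)^2 := by
        have hαne : ((k:ℝ)+1) ^ α ≠ 0 := (Real.rpow_pos_of_pos (hkpos k) α).ne'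
        rw [hγf, Real.rpow_neg (hkpos k).le]
        field_simp
      rw [heq]
      exact div_le_div₀ (hεpos k).le hnum (by nlinarith [hεpos k]) hdd
    · rw [hε0]
      exact div_le_div₀ (by norm_num) (hε1 k) (by positivity)
        (by nlinarith [hεpos k])
  · -- (b1)
    intro k
    have hγlt : γf k < 1 := by
      have hp := Real.rpow_pos_of_pos (hkpos k) α
      rw [hγf, div_lt_one (by positivity)]
      calc (1:ℝ) < (LFx+1)^2 := hL1
        _ ≤ (LFx+1)^2 * ((k:ℝ)+1)^α :=
          le_mul_of_one_le_right (by positivity) (Real.one_le_rpow (hk1 k) (by linarith))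
    calc γf k * ε k ≤ γf k * 1 := by
          have := hε1 k; nlinarith [hγpos k]
      _ < 1 := by rw [mul_one]; exact hγlt
  · -- (b2)
    have key : ∀ k : ℕ, γf k * ε k = (1/(LFx+1)^2) * ((k:ℝ)+1) ^ (-(α+β)) := by
      intro k
      have hαne : ((k:ℝ)+1) ^ α ≠ 0 := (Real.rpow_pos_of_pos (hkpos k) α).ne'
      rw [hγf, hε, show -(α+β) = -α + -β by ring, Real.rpow_add (hkpos k),
        Real.rpow_neg (hkpos k).le α]
      field_simp
    have hns : ¬ Summable (fun k => γf k * ε k) := by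
      intro h
      have h2 : Summable (fun k : ℕ => ((k:ℝ)+1) ^ (-(α+β))) := by
        refine ((h.mul_left ((LFx+1)^2))).congr fun k => ?_
        rw [key k]
        field_simp
      have h3 : Summable (fun k : ℕ => ((k:ℝ)) ^ (-(α+β))) := by
        rw [← summable_nat_add_iff 1]
        exact h2.congr fun k => by push_cast; ring_nf
      rw [Real.summable_nat_rpow] at h3
      linarith
    exact (not_summable_iff_tendsto_nat_atTop_of_nonneg
      (fun k => (mul_pos (hγpos k) (hεpos k)).le)).1 hns
  · -- (c)
    set C : ℝ := (LFx+1)^2 * 2^β with hC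
    have h2βpos : (0:ℝ) < 2^β := Real.rpow_pos_of_pos (by norm_num) β
    have hstep : ∀ k : ℕ, |ε k - ε (k+1)| / (γf (k+1) * ε (k+1)^2)
        ≤ C * ((k:ℝ)+2) ^ (α+β-1) := by
      intro k
      have ha : (0:ℝ) < (k:ℝ)+1 := hkpos k
      have hb : (0:ℝ) < (k:ℝ)+2 := by positivity
      have hcast : ((k+1:ℕ):ℝ) + 1 = (k:ℝ)+2 := by push_cast; ring
      have hε1' : ε (k+1) = ((k:ℝ)+2) ^ (-β) := by rw [hε, hcast]
      have hmono : ε (k+1) ≤ ε k := by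
        rw [hε k, hε1']
        exact Real.rpow_le_rpow_of_nonpos ha (by linarith) (by linarith)
      have hsplit : ε (k+1) = ε k * ((((k:ℝ)+1)/((k:ℝ)+2)) ^ β) := by
        have hane : ((k:ℝ)+1)^β ≠ 0 := (Real.rpow_pos_of_pos ha β).ne'
        have hbne : ((k:ℝ)+2)^β ≠ 0 := (Real.rpow_pos_of_pos hb β).ne'
        rw [hε k, hε1', Real.div_rpow ha.le hb.le, Real.rpow_neg ha.le,
          Real.rpow_neg hb.le]
        field_simp
      have hnum1 : ε k - ε (k+1) ≤ ((k:ℝ)+1) ^ (-β) * (1/((k:ℝ)+2)) := by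
        have h2 : ε k - ε (k+1) = ε k * (1 - (((k:ℝ)+1)/((k:ℝ)+2)) ^ β) := by
          rw [hsplit]; ring
        have hu1 : ((k:ℝ)+1)/((k:ℝ)+2) ≤ (((k:ℝ)+1)/((k:ℝ)+2)) ^ β := by
          have h1 : ((k:ℝ)+1)/((k:ℝ)+2) ≤ 1 := by
            rw [div_le_one hb]; linarith
          have := Real.rpow_le_rpow_of_exponent_ge (by positivity) h1
            (show β ≤ 1 by linarith)
          rwa [Real.rpow_one] at this
        have h3 : 1 - (((k:ℝ)+1)/((k:ℝ)+2)) ^ β ≤ 1/((k:ℝ)+2) := by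
          have h3' : 1 - ((k:ℝ)+1)/((k:ℝ)+2) = 1/((k:ℝ)+2) := by
            field_simp
            norm_num
          linarith
        have h4 : 0 ≤ 1 - (((k:ℝ)+1)/((k:ℝ)+2)) ^ β := by
          have : (((k:ℝ)+1)/((k:ℝ)+2)) ^ β ≤ 1 :=
            Real.rpow_le_one (by positivity) (by rw [div_le_one hb]; linarith)
              (by linarith)
          linarith
        rw [h2, hε k]
        have h5 : (0:ℝ) < ((k:ℝ)+1) ^ (-β) := Real.rpow_pos_of_pos ha _
        exact mul_le_mul_of_nonneg_left h3 h5.le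
      have h2b : ((k:ℝ)+1)^(-β) ≤ 2^β * ((k:ℝ)+2)^(-β) := by
        have h5 : (2*((k:ℝ)+1))^(-β) ≤ ((k:ℝ)+2)^(-β) :=
          Real.rpow_le_rpow_of_nonpos hb (by linarith) (by linarith)
        have h6 : (2*((k:ℝ)+1))^(-β) = 2^(-β) * ((k:ℝ)+1)^(-β) :=
          Real.mul_rpow (by norm_num) ha.le
        have h7 : (2:ℝ)^β * (2:ℝ)^(-β) = 1 := by
          rw [← Real.rpow_add (by norm_num : (0:ℝ)<2)]; norm_num
        calc ((k:ℝ)+1)^(-β) = 2^β * (2^(-β) * ((k:ℝ)+1)^(-β)) := by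
              rw [← mul_assoc, h7, one_mul]
          _ ≤ 2^β * ((k:ℝ)+2)^(-β) := by
              rw [← h6]
              exact mul_le_mul_of_nonneg_left h5 h2βpos.le
      have hnum : |ε k - ε (k+1)| ≤ 2^β * ((k:ℝ)+2)^(-β-1) := by
        rw [abs_of_nonneg (by linarith [hmono])]
        have hb' : ((k:ℝ)+2)^(-β) * (1/((k:ℝ)+2)) = ((k:ℝ)+2)^(-β-1) := by
          rw [show -β-1 = -β + (-1) by ring, Real.rpow_add hb, Real.rpow_neg_one]
          ring
        calc ε k - ε (k+1) ≤ ((k:ℝ)+1)^(-β) * (1/((k:ℝ)+2)) := hnum1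
          _ ≤ (2^β * ((k:ℝ)+2)^(-β)) * (1/((k:ℝ)+2)) :=
              mul_le_mul_of_nonneg_right h2b (by positivity)
          _ = 2^β * ((k:ℝ)+2)^(-β-1) := by rw [mul_assoc, hb']
      have hDpos : 0 < γf (k+1) * ε (k+1)^2 :=
        mul_pos (hγpos _) (pow_pos (hεpos _) 2)
      calc |ε k - ε (k+1)| / (γf (k+1) * ε (k+1)^2)
          ≤ (2^β * ((k:ℝ)+2)^(-β-1)) / (γf (k+1) * ε (k+1)^2) := by
            gcongr
        _ = C * ((k:ℝ)+2) ^ (α+β-1) := by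
            have e1 : ((k:ℝ)+2)^(-(α+2*β)) = (((k:ℝ)+2)^(α+2*β))⁻¹ :=
              Real.rpow_neg hb.le _
            have e2 : ((k:ℝ)+2)^(-β-1) * ((k:ℝ)+2)^(α+2*β) = ((k:ℝ)+2)^(α+β-1) := by
              rw [← Real.rpow_add hb, show (-β-1)+(α+2*β) = α+β-1 by ring]
            have hXpos : (0:ℝ) < ((k:ℝ)+2)^(α+2*β) := Real.rpow_pos_of_pos hb _
            rw [hden k, e1, hC, ← e2]
            field_simp
    have hlim : Tendsto (fun k : ℕ => C * ((k:ℝ)+2)^(α+β-1)) atTop (𝓝 0) := by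
      have h0 : Tendsto (fun x : ℝ => x ^ (α+β-1)) atTop (𝓝 0) := by
        have := tendsto_rpow_neg_atTop (show (0:ℝ) < 1-(α+β) by linarith)
        simpa [show -(1-(α+β)) = α+β-1 by ring] using this
      have h2 : Tendsto (fun k : ℕ => ((k:ℝ)+2)) atTop atTop :=
        tendsto_atTop_add_const_right _ _ tendsto_natCast_atTop_atTop
      simpa using (h0.comp h2).const_mul C
    exact squeeze_zero
      (fun k => div_nonneg (abs_nonneg _) (mul_nonneg (hγpos _).le (sq_nonneg _)))
      hstep hlim
  · -- (d1)
    refine (hmain β 1).congr fun k => ?_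
    rw [hε, Real.rpow_neg (hkpos k).le, div_eq_mul_inv, inv_inv]
    push_cast
    ring
  · -- (d2)
    have h := (hmain (α+2*β) 2).const_mul ((LFx+1)^2)
    rw [mul_zero] at h
    refine h.congr fun k => ?_
    have hb : (0:ℝ) < (k:ℝ)+2 := by positivity
    rw [hden k, Real.rpow_neg hb.le, div_div_eq_mul_div, div_eq_mul_inv _ (_⁻¹), inv_inv]
    push_cast
    ring
end
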